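/- (Exact computation, Corollary 2.) Let 𝒜 : ℝ^{m×n} → ℝ^p be a linear map satisfying the R-RIP at rank 2r with constant δ ∈ (0,1). Suppose y = 𝒜(X★) + e with rank(X★) ≤ r. Let C > 0, let X_i have rank(X_i) ≤ r with f(X_i) > C²‖e‖₂², set μ = 1/(2(1+δ)), and let X_{i+1} be a best rank-r approximation in the Frobenius norm of X_i − μ∇f(X_i). Then f(X_{i+1}) ≤ θ·f(X_i) + τ·‖e‖₂², where θ = (2δ/(1−δ))·(1 + 2/C) and τ = 1 + 2δ/(1−δ). -/
import Mathlib


open scoped BigOperators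

/-- Squared Frobenius norm of a real matrix. -/
noncomputable def frobSq {m n : ℕ} (X : Matrix (Fin m) (Fin n) ℝ) : ℝ :=
  ∑ i, ∑ j, (X i j) ^ 2

/-- Frobenius norm of a real matrix. -/
noncomputable def frobNorm {m n : ℕ} (X : Matrix (Fin m) (Fin n) ℝ) : ℝ :=
  Real.sqrt (frobSq X)

/-- Frobenius inner product `⟨X, Y⟩ = tr(Xᵀ Y)`. -/
noncomputable def frobInner {m n : ℕ} (X Y : Matrix (Fin m) (Fin n) ℝ) : ℝ :=
  ∑ i, ∑ j, X i j * Y i j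

/-- Squared Euclidean norm on `ℝ^p`. -/
noncomputable def vecNormSq {p : ℕ} (v : Fin p → ℝ) : ℝ := ∑ i, (v i) ^ 2

/-- Euclidean norm on `ℝ^p`. -/
noncomputable def vecNorm {p : ℕ} (v : Fin p → ℝ) : ℝ := Real.sqrt (vecNormSq v)

/-- Euclidean inner product on `ℝ^p`. -/
noncomputable def dotp {p : ℕ} (v w : Fin p → ℝ) : ℝ := ∑ i, v i * w i

/-- Rank restricted isometry property (R-RIP) at rank `s` with constant `δ`. -/
def RIP {m n p : ℕ} (A : Matrix (Fin m) (Fin n) ℝ →ₗ[ℝ] (Fin p → ℝ)) (s : ℕ) (δ : ℝ) : Prop :=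
  ∀ X : Matrix (Fin m) (Fin n) ℝ, X.rank ≤ s →
    (1 - δ) * frobSq X ≤ vecNormSq (A X) ∧ vecNormSq (A X) ≤ (1 + δ) * frobSq X

/-- The data error `f(X) = ‖y - 𝒜 X‖₂²`. -/
noncomputable def dataErr {m n p : ℕ} (A : Matrix (Fin m) (Fin n) ℝ →ₗ[ℝ] (Fin p → ℝ))
    (y : Fin p → ℝ) (X : Matrix (Fin m) (Fin n) ℝ) : ℝ :=
  vecNormSq (y - A X)

/-- `Aadj` is the adjoint of `A` with respect to the Frobenius and Euclidean inner products. -/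
def IsAdjoint {m n p : ℕ} (A : Matrix (Fin m) (Fin n) ℝ →ₗ[ℝ] (Fin p → ℝ))
    (Aadj : (Fin p → ℝ) →ₗ[ℝ] Matrix (Fin m) (Fin n) ℝ) : Prop :=
  ∀ (z : Fin p → ℝ) (X : Matrix (Fin m) (Fin n) ℝ), frobInner (Aadj z) X = dotp z (A X)

/-- The gradient `∇f(X) = 2 𝒜*(𝒜 X - y)` of the data error. -/
noncomputable def gradErr {m n p : ℕ} (A : Matrix (Fin m) (Fin n) ℝ →ₗ[ℝ] (Fin p → ℝ))
    (Aadj : (Fin p → ℝ) →ₗ[ℝ] Matrix (Fin m) (Fin n) ℝ) (y : Fin p → ℝ)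
    (X : Matrix (Fin m) (Fin n) ℝ) : Matrix (Fin m) (Fin n) ℝ :=
  (2 : ℝ) • Aadj (A X - y)


lemma vecNormSq_nonneg {p : ℕ} (v : Fin p → ℝ) : 0 ≤ vecNormSq v :=
  Finset.sum_nonneg fun _ _ => sq_nonneg _

lemma frobSq_nonneg {m n : ℕ} (X : Matrix (Fin m) (Fin n) ℝ) : 0 ≤ frobSq X :=
  Finset.sum_nonneg fun _ _ => Finset.sum_nonneg fun _ _ => sq_nonneg _

lemma vecNormSq_sub {p : ℕ} (u w : Fin p → ℝ) :
    vecNormSq (u - w) = vecNormSq u - 2 * dotp u w + vecNormSq w := by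
  simp only [vecNormSq, dotp, Pi.sub_apply, Finset.mul_sum, ← Finset.sum_add_distrib,
    ← Finset.sum_sub_distrib]
  exact Finset.sum_congr rfl fun i _ => by ring

lemma frobSq_add_smul {m n : ℕ} (D G : Matrix (Fin m) (Fin n) ℝ) (c : ℝ) :
    frobSq (D + c • G) = frobSq D + 2 * c * frobInner G D + c ^ 2 * frobSq G := by
  simp only [frobSq, frobInner, Matrix.add_apply, Matrix.smul_apply, smul_eq_mul,
    Finset.mul_sum, ← Finset.sum_add_distrib]
  exact Finset.sum_congr rfl fun i _ => Finset.sum_congr rfl fun j _ => by ring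

lemma frobInner_smul_left' {m n : ℕ} (c : ℝ) (X Y : Matrix (Fin m) (Fin n) ℝ) :
    frobInner (c • X) Y = c * frobInner X Y := by
  simp only [frobInner, Matrix.smul_apply, smul_eq_mul, Finset.mul_sum, mul_assoc]

lemma dotp_neg_left' {p : ℕ} (v w : Fin p → ℝ) : dotp (-v) w = - dotp v w := by
  simp [dotp]

lemma rank_sub_le' {m n : ℕ} (X Y : Matrix (Fin m) (Fin n) ℝ) :
    (X - Y).rank ≤ X.rank + Y.rank := by
  have h : (X - Y).mulVecLin = X.mulVecLin - Y.mulVecLin := by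
    ext v i; simp [Matrix.sub_mulVec]
  have hr : LinearMap.range (X - Y).mulVecLin ≤
      LinearMap.range X.mulVecLin ⊔ LinearMap.range Y.mulVecLin := by
    rintro _ ⟨v, rfl⟩
    rw [h]
    exact Submodule.sub_mem _ (Submodule.mem_sup_left ⟨v, rfl⟩)
      (Submodule.mem_sup_right ⟨v, rfl⟩)
  calc (X - Y).rank ≤ Module.finrank ℝ
        ↥(LinearMap.range X.mulVecLin ⊔ LinearMap.range Y.mulVecLin) :=
        Submodule.finrank_mono hr
    _ ≤ X.rank + Y.rank := Submodule.finrank_add_le_finrank_add_finrank _ _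


set_option maxHeartbeats 1000000 in
/-- Exact computation (Corollary 2).  If `𝒜` satisfies the R-RIP at rank
`2r` with constant `δ ∈ (0,1)`, `y = 𝒜 X★ + e` with `rank X★ ≤ r`, `C > 0`,
`rank X_i ≤ r` with `f(X_i) > C²‖e‖₂²`, `μ = 1/(2(1+δ))`, and `X_{i+1}` is a best
rank-`r` approximation in Frobenius norm of `X_i - μ∇f(X_i)`, then
`f(X_{i+1}) ≤ (2δ/(1-δ))(1 + 2/C) f(X_i) + (1 + 2δ/(1-δ))‖e‖₂²`. -/
theorem stmt12 {m n p : ℕ} (A : Matrix (Fin m) (Fin n) ℝ →ₗ[ℝ] (Fin p → ℝ))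
    (Aadj : (Fin p → ℝ) →ₗ[ℝ] Matrix (Fin m) (Fin n) ℝ) (hAdj : IsAdjoint A Aadj)
    (r : ℕ) (δ : ℝ) (hδ0 : 0 < δ) (hδ1 : δ < 1) (hRIP : RIP A (2 * r) δ)
    (Xstar : Matrix (Fin m) (Fin n) ℝ) (hXstar : Xstar.rank ≤ r)
    (e : Fin p → ℝ) (y : Fin p → ℝ) (hy : y = A Xstar + e)
    (C : ℝ) (hC : 0 < C)
    (Xi : Matrix (Fin m) (Fin n) ℝ) (hXi : Xi.rank ≤ r)
    (hfXi : dataErr A y Xi > C ^ 2 * vecNormSq e)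
    (μ : ℝ) (hμ : μ = 1 / (2 * (1 + δ)))
    (Xnext : Matrix (Fin m) (Fin n) ℝ) (hXnextRank : Xnext.rank ≤ r)
    (hXnextBest : ∀ W : Matrix (Fin m) (Fin n) ℝ, W.rank ≤ r →
      frobNorm (Xnext - (Xi - μ • gradErr A Aadj y Xi)) ≤
        frobNorm (W - (Xi - μ • gradErr A Aadj y Xi))) :
    dataErr A y Xnext ≤
      (2 * δ / (1 - δ)) * (1 + 2 / C) * dataErr A y Xi
        + (1 + 2 * δ / (1 - δ)) * vecNormSq e := by
  have h1δ : (0:ℝ) < 1 + δ := by linarith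
  have h1mδ : (0:ℝ) < 1 - δ := by linarith
  set G := gradErr A Aadj y Xi with hG
  set Dn := Xnext - Xi with hDn
  set Ds := Xstar - Xi with hDs
  set B := dataErr A y Xi with hB
  set E := vecNormSq e with hE
  have hBdef : B = vecNormSq (y - A Xi) := rfl
  have hEnn : 0 ≤ E := vecNormSq_nonneg e
  have hBpos : 0 < B := lt_of_le_of_lt (by positivity) hfXi
  -- key identity: f(W) = f(Xi) + ⟨G, W - Xi⟩ + ‖A(W - Xi)‖²
  have key : ∀ W : Matrix (Fin m) (Fin n) ℝ,
      dataErr A y W = B + frobInner G (W - Xi) + vecNormSq (A (W - Xi)) := by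
    intro W
    have h1 : y - A W = (y - A Xi) - A (W - Xi) := by rw [map_sub]; abel
    have h2 : frobInner G (W - Xi) = -(2 * dotp (y - A Xi) (A (W - Xi))) := by
      rw [hG]
      simp only [gradErr]
      rw [frobInner_smul_left', hAdj]
      have h3 : A Xi - y = -(y - A Xi) := by abel
      rw [h3, dotp_neg_left']; ring
    rw [dataErr, h1, vecNormSq_sub, h2, hBdef]; ring
  -- best approximation inequality in squared form
  have hbest := hXnextBest Xstar hXstar
  have hbestSq : frobSq (Xnext - (Xi - μ • G)) ≤ frobSq (Xstar - (Xi - μ • G)) := by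
    have h1 := frobSq_nonneg (Xnext - (Xi - μ • G))
    have h2 := frobSq_nonneg (Xstar - (Xi - μ • G))
    have h3 := pow_le_pow_left₀ (Real.sqrt_nonneg _) hbest 2
    simp only [frobNorm] at h3
    rwa [Real.sq_sqrt h1, Real.sq_sqrt h2] at h3
  have eN : Xnext - (Xi - μ • G) = Dn + μ • G := by rw [hDn]; abel
  have eS : Xstar - (Xi - μ • G) = Ds + μ • G := by rw [hDs]; abel
  rw [eN, eS, frobSq_add_smul, frobSq_add_smul] at hbestSq
  -- the shifted inequality (*)
  have hstar : (1 + δ) * frobSq Dn + frobInner G Dn ≤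
      (1 + δ) * frobSq Ds + frobInner G Ds := by
    have e2 : ∀ a x : ℝ, (1 + δ) * a + x = (1 + δ) * (a + 2 * μ * x) := by
      intro a x; rw [hμ]; field_simp
    rw [e2 (frobSq Dn) _, e2 (frobSq Ds) _]
    apply mul_le_mul_of_nonneg_left _ h1δ.le
    linarith
  -- rank bounds and RIP
  have hrDn : Dn.rank ≤ 2 * r := by
    rw [hDn]
    have := rank_sub_le' Xnext Xi
    omega
  have hrDs : Ds.rank ≤ 2 * r := by
    rw [hDs]
    have := rank_sub_le' Xstar Xi
    omega
  obtain ⟨hlo, hhiDs⟩ := hRIP Ds hrDs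
  have hhiDn := (hRIP Dn hrDn).2
  -- f(Xstar) = ‖e‖²
  have hfs : dataErr A y Xstar = E := by
    rw [dataErr, hy, hE]
    congr 1
    abel
  -- A Ds = (y - A Xi) - e
  have hADs : A Ds = (y - A Xi) - e := by
    have hAXs : A Xstar = y - e := by rw [hy]; abel
    rw [hDs, map_sub, hAXs]; abel
  set T := vecNormSq (A Ds) with hT
  set x := dotp (y - A Xi) e with hx
  have hTeq : T = B - 2 * x + E := by rw [hT, hADs, vecNormSq_sub, hBdef, hE, hx]
  -- Cauchy-Schwarz bound: -2x ≤ (2/C) * B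
  have hcs : x ^ 2 ≤ B * E := by
    rw [hx, hBdef, hE]
    simpa [dotp, vecNormSq] using
      Finset.sum_mul_sq_le_sq_mul_sq Finset.univ (fun i => (y - A Xi) i) e
  have hxle : -(2 * x) ≤ (2 / C) * B := by
    have hEB : E ≤ B / C ^ 2 := by
      rw [le_div_iff₀ (by positivity)]
      nlinarith [hfXi]
    have hx2 : x ^ 2 ≤ (B / C) ^ 2 := by
      calc x ^ 2 ≤ B * E := hcs
        _ ≤ B * (B / C ^ 2) := by nlinarith [hBpos]
        _ = (B / C) ^ 2 := by field_simp
    have hBC : (0:ℝ) ≤ B / C := by positivity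
    have h4 := (abs_le_of_sq_le_sq' hx2 hBC).1
    have h5 : (2 / C) * B = 2 * (B / C) := by ring
    rw [h5]; linarith
  have hTb : T ≤ (1 + 2 / C) * B + E := by
    rw [hTeq]; nlinarith [hxle]
  -- combine
  have keyN := key Xnext
  have keyS := key Xstar
  rw [← hDn] at keyN
  rw [← hDs] at keyS
  have step1 : dataErr A y Xnext ≤ B + frobInner G Dn + (1 + δ) * frobSq Dn := by
    rw [keyN]; linarith [hhiDn]
  have step2 : dataErr A y Xnext ≤ B + frobInner G Ds + (1 + δ) * frobSq Ds := by
    linarith [step1, hstar]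
  have step3 : dataErr A y Xnext ≤ E + (1 + δ) * frobSq Ds - T := by
    have : B + frobInner G Ds = E - T := by
      rw [hfs] at keyS; linarith [keyS]
    linarith [step2, this]
  have step4 : dataErr A y Xnext ≤ E + 2 * δ * frobSq Ds := by
    linarith [step3, hlo]
  have hS : frobSq Ds ≤ ((1 + 2 / C) * B + E) / (1 - δ) := by
    rw [le_div_iff₀ h1mδ]
    nlinarith [hlo, hTb]
  have step5 : dataErr A y Xnext ≤ E + 2 * δ * (((1 + 2 / C) * B + E) / (1 - δ)) := by
    have h2δ : (0:ℝ) ≤ 2 * δ := by linarith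
    nlinarith [mul_le_mul_of_nonneg_left hS h2δ, step4]
  have heq : (2 * δ / (1 - δ)) * (1 + 2 / C) * B + (1 + 2 * δ / (1 - δ)) * E
      = E + 2 * δ * (((1 + 2 / C) * B + E) / (1 - δ)) := by
    field_simp
    ring
  linarith [step5, heq.le, heq.ge]
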